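/- arXiv:1506.01661 — 9 statements merged into one kernel-verified Lean document; each statement's English description precedes it below -/
import Mathlib

section
/- For any quasicontinuous function f : X → Y from a topological space X to a metrizable space Y, the set D(f) of points at which f is not continuous is meager in X. -/
/-!
The oscillation of any function into a pseudo-emetric space is upper semicontinuous, so each set
`{x | ε ≤ oscillation f x}` is closed. For quasicontinuous `f` it also has empty interior: near any
point there is a nonempty open set that `f` maps into a set of diameter `< ε`, and the oscillation
is `< ε` there. The discontinuity points are the points of positive oscillation, a countable union
of these nowhere dense sets.
-/

/-- A function is quasicontinuous at `x` if for every neighborhood `U` of `x` and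
every neighborhood `V` of `f x` there is a nonempty open `W ⊆ U` with `f '' W ⊆ V`. -/
def Quasicontinuous {X Y : Type*} [TopologicalSpace X] [TopologicalSpace Y] (f : X → Y) : Prop :=
  ∀ x : X, ∀ U ∈ nhds x, ∀ V ∈ nhds (f x),
    ∃ W : Set X, IsOpen W ∧ W.Nonempty ∧ W ⊆ U ∧ f '' W ⊆ V

open Topology Set Filter
open Metric (ediam eball ediam_eball_le eball_mem_nhds)

theorem exists_mem_nhds_ediam_lt {Y : Type*} [PseudoEMetricSpace Y] (y : Y) {ε : ENNReal}
    (hε : 0 < ε) : ∃ V ∈ 𝓝 y, ediam V < ε := by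
  obtain ⟨δ, hδ, hδε⟩ := exists_between hε
  refine ⟨eball y (δ / 2), eball_mem_nhds y (ENNReal.half_pos hδ.ne'), ?_⟩
  calc ediam (eball y (δ / 2)) ≤ 2 * (δ / 2) := ediam_eball_le
    _ = δ := ENNReal.mul_div_cancel two_ne_zero ENNReal.ofNat_ne_top
    _ < ε := hδε

section Oscillation

variable {X Y : Type*} [TopologicalSpace X] [PseudoEMetricSpace Y] {f : X → Y}

theorem oscillation_le_ediam {x : X} {S : Set Y} (hS : S ∈ (𝓝 x).map f) :
    oscillation f x ≤ ediam S :=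
  biInf_le _ hS

theorem upperSemicontinuous_oscillation (f : X → Y) : UpperSemicontinuous (oscillation f) := by
  intro x ε hε
  obtain ⟨S, hS, hSε⟩ : ∃ S ∈ (𝓝 x).map f, ediam S < ε := by
    simpa only [oscillation, iInf_lt_iff, exists_prop] using hε
  filter_upwards [eventually_mem_nhds_iff.2 hS] with x' hx'
  exact (oscillation_le_ediam (f := f) hx').trans_lt hSε

theorem Quasicontinuous.interior_setOf_le_oscillation_eq_empty (hf : Quasicontinuous f)
    {ε : ENNReal} (hε : 0 < ε) : interior {x | ε ≤ oscillation f x} = ∅ := by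
  refine eq_empty_iff_forall_notMem.2 fun x hx => ?_
  obtain ⟨V, hV, hVε⟩ := exists_mem_nhds_ediam_lt (f x) hε
  obtain ⟨W, hWo, ⟨w, hw⟩, hWU, hWV⟩ := hf x _ (isOpen_interior.mem_nhds hx) V hV
  have hV_map : V ∈ (𝓝 w).map f := mem_of_superset (image_mem_map (hWo.mem_nhds hw)) hWV
  have hεw : w ∈ {x | ε ≤ oscillation f x} := interior_subset (hWU hw)
  exact not_lt_of_ge hεw ((oscillation_le_ediam hV_map).trans_lt hVε)

theorem Quasicontinuous.isNowhereDense_setOf_le_oscillation (hf : Quasicontinuous f)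
    {ε : ENNReal} (hε : 0 < ε) : IsNowhereDense {x | ε ≤ oscillation f x} :=
  ((upperSemicontinuous_oscillation f).isClosed_preimage ε).isNowhereDense_iff.2
    (hf.interior_setOf_le_oscillation_eq_empty hε)

theorem setOf_not_continuousAt_subset_iUnion_oscillation (f : X → Y) :
    {x | ¬ContinuousAt f x} ⊆ ⋃ n : ℕ, {x | (n : ENNReal)⁻¹ ≤ oscillation f x} := by
  intro x hx
  obtain ⟨n, hn⟩ := ENNReal.exists_inv_nat_lt (mt (Oscillation.eq_zero_iff_continuousAt f x).1 hx)
  exact mem_iUnion.2 ⟨n, hn.le⟩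

end Oscillation

theorem quasicontinuous_discontinuity_meagre
    {X Y : Type*} [TopologicalSpace X] [TopologicalSpace Y]
    [TopologicalSpace.MetrizableSpace Y] (f : X → Y)
    (hf : Quasicontinuous f) :
    IsMeagre {x : X | ¬ ContinuousAt f x} := by
  let := TopologicalSpace.pseudoMetrizableSpacePseudoMetric Y
  refine (isMeagre_iUnion fun n : ℕ => ?_).mono (setOf_not_continuousAt_subset_iUnion_oscillation f)
  exact (hf.isNowhereDense_setOf_le_oscillation (by simp)).isMeagre
end

section
/- For any quasicontinuous function f : X → Y from a topological space X to a space Y that is strictly fragmented by a metric d, the set of discontinuity points of f is meager in X. -/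
section Oscillation

variable {X Y : Type*} [TopologicalSpace X]

def IsFragmentedBy [TopologicalSpace Y] (d : Y → Y → ℝ) : Prop :=
  ∀ ε > (0:ℝ), ∀ A : Set Y, A.Nonempty →
    ∃ U : Set Y, IsOpen U ∧ (A ∩ U).Nonempty ∧ ∀ y ∈ A ∩ U, ∀ z ∈ A ∩ U, d y z < ε

def OpenSetsAreDistOpen [TopologicalSpace Y] (d : Y → Y → ℝ) : Prop :=
  ∀ V : Set Y, IsOpen V → ∀ y ∈ V, ∃ ε > (0:ℝ), ∀ z, d y z < ε → z ∈ V

def oscillationGeSet (d : Y → Y → ℝ) (f : X → Y) (ε : ℝ) : Set X :=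
  {x | ∀ U : Set X, IsOpen U → x ∈ U → ∃ y ∈ U, ∃ z ∈ U, ε ≤ d (f y) (f z)}

variable (d : Y → Y → ℝ) (f : X → Y)

theorem oscillationGeSet_anti : Antitone (oscillationGeSet d f) :=
  fun _ _ hεδ _ hx U hU hxU =>
    let ⟨y, hy, z, hz, hyz⟩ := hx U hU hxU
    ⟨y, hy, z, hz, hεδ.trans hyz⟩

theorem isClosed_oscillationGeSet (ε : ℝ) : IsClosed (oscillationGeSet d f ε) := by
  refine isOpen_compl_iff.1 <| isOpen_iff_forall_mem_open.2 fun x hx => ?_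
  simp only [oscillationGeSet, Set.mem_compl_iff, Set.mem_ofPred_eq, not_forall] at hx
  obtain ⟨U, hU, hxU, hsmall⟩ := hx
  refine ⟨U, fun x' hx' hE => hsmall (hE U hU hx'), hU, hxU⟩

theorem interior_oscillationGeSet_eq_empty [TopologicalSpace Y] (hfrag : IsFragmentedBy d)
    (hf : Quasicontinuous f) {ε : ℝ} (hε : 0 < ε) : interior (oscillationGeSet d f ε) = ∅ := by
  set I := interior (oscillationGeSet d f ε)
  refine Set.eq_empty_of_forall_notMem fun x hx => ?_
  obtain ⟨U, hU, ⟨_, ⟨x₀, hx₀, rfl⟩, hx₀U⟩, hdiam⟩ := hfrag ε hε (f '' I) ⟨f x, x, hx, rfl⟩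
  obtain ⟨W, hW, ⟨w, hw⟩, hWI, hWU⟩ :=
    hf x₀ I (isOpen_interior.mem_nhds hx₀) U (hU.mem_nhds hx₀U)
  obtain ⟨y, hy, z, hz, hyz⟩ := interior_subset (hWI hw) W hW hw
  have mem_of_mem_W : ∀ t ∈ W, f t ∈ f '' I ∩ U :=
    fun t ht => ⟨⟨t, hWI ht, rfl⟩, hWU ⟨t, ht, rfl⟩⟩
  exact (hdiam _ (mem_of_mem_W y hy) _ (mem_of_mem_W z hz)).not_ge hyz

theorem isNowhereDense_oscillationGeSet [TopologicalSpace Y] (hfrag : IsFragmentedBy d)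
    (hf : Quasicontinuous f) {ε : ℝ} (hε : 0 < ε) : IsNowhereDense (oscillationGeSet d f ε) :=
  (isClosed_oscillationGeSet d f ε).isNowhereDense_iff.2 <|
    interior_oscillationGeSet_eq_empty d f hfrag hf hε

theorem continuousAt_of_forall_notMem_oscillationGeSet [TopologicalSpace Y]
    (hstrict : OpenSetsAreDistOpen d) {x : X} (hx : ∀ ε > 0, x ∉ oscillationGeSet d f ε) :
    ContinuousAt f x := by
  intro V hV
  obtain ⟨V', hV'V, hV', hxV'⟩ := mem_nhds_iff.1 hV
  obtain ⟨ε, hε, hball⟩ := hstrict V' hV' (f x) hxV'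
  have hxε := hx ε hε
  simp only [oscillationGeSet, Set.mem_ofPred_eq, not_forall] at hxε
  obtain ⟨U, hU, hxU, hsmall⟩ := hxε
  push Not at hsmall
  show f ⁻¹' V ∈ nhds x
  exact Filter.mem_of_superset (hU.mem_nhds hxU) fun y hy => hV'V (hball _ (hsmall x hxU y hy))

theorem setOf_not_continuousAt_subset_iUnion_oscillationGeSet [TopologicalSpace Y]
    (hstrict : OpenSetsAreDistOpen d) :
    {x | ¬ ContinuousAt f x} ⊆ ⋃ n : ℕ, oscillationGeSet d f (1 / (n + 1)) := by
  intro x hx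
  by_contra hx_notMem
  refine hx <| continuousAt_of_forall_notMem_oscillationGeSet d f hstrict fun ε hε hxε => ?_
  obtain ⟨n, hn⟩ := exists_nat_one_div_lt hε
  exact hx_notMem (Set.mem_iUnion.2 ⟨n, oscillationGeSet_anti d f hn.le hxε⟩)

end Oscillation

theorem quasicontinuous_into_strictly_fragmentable_discontinuity_meagre_general
    {X Y : Type*} [TopologicalSpace X] [TopologicalSpace Y]
    (d : Y → Y → ℝ)
    -- `Y` is fragmented by `d`:
    (hfrag : ∀ ε > (0:ℝ), ∀ A : Set Y, A.Nonempty →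
      ∃ U : Set Y, IsOpen U ∧ (A ∩ U).Nonempty ∧
        ∀ y ∈ A ∩ U, ∀ z ∈ A ∩ U, d y z < ε)
    -- the topology generated by `d` is finer than the topology of `Y`
    -- (strict fragmentation):
    (hstrict : ∀ V : Set Y, IsOpen V → ∀ y ∈ V, ∃ ε > (0:ℝ), ∀ z, d y z < ε → z ∈ V)
    (f : X → Y) (hf : Quasicontinuous f) :
    IsMeagre {x : X | ¬ ContinuousAt f x} :=
  (isMeagre_iUnion fun n : ℕ =>
    (isNowhereDense_oscillationGeSet d f hfrag hf (by positivity)).isMeagre).mono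
    (setOf_not_continuousAt_subset_iUnion_oscillationGeSet d f hstrict)

theorem quasicontinuous_into_strictly_fragmentable_discontinuity_meagre
    {X Y : Type*} [TopologicalSpace X] [TopologicalSpace Y]
    (d : Y → Y → ℝ)
    -- `d` is a metric on `Y`:
    (hd_self : ∀ y, d y y = 0)
    (hd_eq : ∀ y z, d y z = 0 → y = z)
    (hd_symm : ∀ y z, d y z = d z y)
    (hd_triangle : ∀ x y z, d x z ≤ d x y + d y z)
    -- `Y` is fragmented by `d`:
    (hfrag : ∀ ε > (0:ℝ), ∀ A : Set Y, A.Nonempty →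
      ∃ U : Set Y, IsOpen U ∧ (A ∩ U).Nonempty ∧
        ∀ y ∈ A ∩ U, ∀ z ∈ A ∩ U, d y z < ε)
    -- the topology generated by `d` is finer than the topology of `Y`
    -- (strict fragmentation):
    (hstrict : ∀ V : Set Y, IsOpen V → ∀ y ∈ V, ∃ ε > (0:ℝ), ∀ z, d y z < ε → z ∈ V)
    (f : X → Y) (hf : Quasicontinuous f) :
    IsMeagre {x : X | ¬ ContinuousAt f x} :=
  quasicontinuous_into_strictly_fragmentable_discontinuity_meagre_general d hfrag hstrict f hf
end

section
/- If N is a σ-locally finite family of subsets of a paracompact Hausdorff space X, then for any subspace C ⊆ X that is countably cellular (every disjoint family of nonempty open subsets of C is countable), the subfamily {N ∈ N : C ∩ N ≠ ∅} is at most countable. -/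
/-!
Pick a point of `C ∩ N` for every member `N` of a locally finite family meeting `C`. The chosen
points form a closed discrete subset of the paracompact Hausdorff space `X`, so they can be
separated by pairwise disjoint open sets; their traces on `C` are disjoint nonempty open subsets
of `C`, hence there are only countably many chosen points. A countable set meets only countably
many members of a locally finite family, and a countable union of countable families is countable.
-/

open Set Topology

def CountablyCellular (Y : Type*) [TopologicalSpace Y] : Prop :=
  ∀ 𝒪 : Set (Set Y), (∀ O ∈ 𝒪, IsOpen O ∧ O.Nonempty) → 𝒪.Pairwise Disjoint → 𝒪.Countable

theorem CountablyCellular.countable_of_pairwiseDisjoint {Y ι : Type*} [TopologicalSpace Y]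
    (hY : CountablyCellular Y) {s : ι → Set Y} {a : Set ι} (h : a.PairwiseDisjoint s)
    (ho : ∀ i ∈ a, IsOpen (s i)) (hne : ∀ i ∈ a, (s i).Nonempty) : a.Countable := by
  have hinj : a.InjOn s := fun i hi j hj hij =>
    h.elim hi hj fun hd => (hne i hi).ne_empty (disjoint_self.1 (hij ▸ hd))
  refine countable_of_injective_of_countable_image hinj (hY _ ?_ (hinj.pairwiseDisjoint_image.2 h))
  rintro _ ⟨i, hi, rfl⟩
  exact ⟨ho i hi, hne i hi⟩

section

variable {X : Type*} [TopologicalSpace X]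

theorem exists_mem_nhds_inter_subsingleton_of_finite [T1Space X] {A : Set X} {z : X}
    (h : ∃ U ∈ 𝓝 z, (U ∩ A).Finite) : ∃ W ∈ 𝓝 z, (W ∩ A).Subsingleton := by
  obtain ⟨U, hU, hfin⟩ := h
  have hz : z ∉ (U ∩ A) \ {z} := fun hz => hz.2 rfl
  refine ⟨U ∩ ((U ∩ A) \ {z})ᶜ, Filter.inter_mem hU (hfin.sdiff.isClosed.compl_mem_nhds hz), ?_⟩
  refine (subsingleton_singleton (a := z)).anti fun x ⟨⟨hxU, hx⟩, hxA⟩ => ?_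
  by_contra hxz
  exact hx ⟨⟨hxU, hxA⟩, hxz⟩

/-- The step making paracompact spaces collectionwise Hausdorff: `V a` avoids every `closure (v i)`
not containing `a`, and is open because these closures form a locally finite family. -/
theorem LocallyFinite.exists_pairwiseDisjoint_isOpen {ι : Type*} {v : ι → Set X}
    (hlf : LocallyFinite v) (hcov : ⋃ i, v i = univ) {A : Set X}
    (hA : ∀ i, (closure (v i) ∩ A).Subsingleton) :
    ∃ V : X → Set X, (∀ a, IsOpen (V a) ∧ a ∈ V a) ∧ A.PairwiseDisjoint V := by
  set N : X → Set X := fun a => ⋂ (i) (_ : a ∉ closure (v i)), (closure (v i))ᶜ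
  have hN : ∀ a, N a ∈ 𝓝 a := hlf.closure.iInter_compl_mem_nhds fun _ => isClosed_closure
  refine ⟨fun a => interior (N a),
    fun a => ⟨isOpen_interior, mem_interior_iff_mem_nhds.2 (hN a)⟩, ?_⟩
  refine PairwiseDisjoint.mono ?_ fun a => interior_subset
  intro a ha b hb hab
  refine disjoint_left.2 fun x hxa hxb => hab ?_
  obtain ⟨i, hxi⟩ := iUnion_eq_univ_iff.1 hcov x
  have hmem : ∀ c, x ∈ N c → c ∈ closure (v i) := fun c hc => by
    by_contra hci
    exact mem_iInter₂.1 hc i hci (subset_closure hxi)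
  exact hA i ⟨hmem a hxa, ha⟩ ⟨hmem b hxb, hb⟩

theorem exists_pairwiseDisjoint_isOpen_of_forall_nhds_subsingleton [ParacompactSpace X]
    [RegularSpace X] {A : Set X} (hA : ∀ z, ∃ W ∈ 𝓝 z, (W ∩ A).Subsingleton) :
    ∃ V : X → Set X, (∀ a, IsOpen (V a) ∧ a ∈ V a) ∧ A.PairwiseDisjoint V := by
  have hO : ∀ z, ∃ O, IsOpen O ∧ z ∈ O ∧ (closure O ∩ A).Subsingleton := fun z => by
    obtain ⟨W, hW, hWA⟩ := hA z
    obtain ⟨t, ht, htc, htW⟩ := exists_mem_nhds_isClosed_subset hW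
    exact ⟨interior t, isOpen_interior, mem_interior_iff_mem_nhds.2 ht,
      hWA.anti (inter_subset_inter_left _ ((closure_minimal interior_subset htc).trans htW))⟩
  choose O hOo hzO hOA using hO
  obtain ⟨v, -, hcov, hlf, hvO⟩ :=
    precise_refinement O hOo (iUnion_eq_univ_iff.2 fun z => ⟨z, hzO z⟩)
  exact hlf.exists_pairwiseDisjoint_isOpen hcov fun z =>
    (hOA z).anti (inter_subset_inter_left _ (closure_mono (hvO z)))

section LocallyFiniteFamily

variable {𝒢 : Set (Set X)} (hlf : ∀ x : X, ∃ U ∈ 𝓝 x, {N ∈ 𝒢 | (N ∩ U).Nonempty}.Finite)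
include hlf

theorem countable_setOf_inter_nonempty_of_countable {s : Set X} (hs : s.Countable) :
    {N ∈ 𝒢 | (s ∩ N).Nonempty}.Countable := by
  choose U hU hfin using hlf
  refine (hs.biUnion fun a _ => (hfin a).countable).mono ?_
  rintro N ⟨hN, a, has, haN⟩
  exact mem_biUnion has ⟨hN, a, haN, mem_of_mem_nhds (hU a)⟩

theorem countable_setOf_inter_nonempty_of_countablyCellular [ParacompactSpace X] [T2Space X]
    {C : Set X} (hC : CountablyCellular C) : {N ∈ 𝒢 | (C ∩ N).Nonempty}.Countable := by
  set T := {N ∈ 𝒢 | (C ∩ N).Nonempty}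
  choose p hp using fun N : T => N.2.2
  have hdiscrete : ∀ z, ∃ W ∈ 𝓝 z, (W ∩ range p).Subsingleton := fun z => by
    obtain ⟨U, hU, hfin⟩ := hlf z
    refine exists_mem_nhds_inter_subsingleton_of_finite
      ⟨U, hU, ((hfin.preimage Subtype.val_injective.injOn).image p).subset ?_⟩
    rintro _ ⟨hU, N, rfl⟩
    exact ⟨N, ⟨N.2.1, p N, (hp N).2, hU⟩, rfl⟩
  obtain ⟨V, hV, hdisj⟩ := exists_pairwiseDisjoint_isOpen_of_forall_nhds_subsingleton hdiscrete
  have hpT : (range p).Countable :=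
    hC.countable_of_pairwiseDisjoint (s := fun a => (↑) ⁻¹' V a)
      (fun a ha b hb hab => (hdisj ha hb hab).preimage _)
      (fun a _ => (hV a).1.preimage continuous_subtype_val)
      (by rintro _ ⟨N, rfl⟩; exact ⟨⟨p N, (hp N).1⟩, (hV _).2⟩)
  refine (countable_setOf_inter_nonempty_of_countable hlf hpT).mono fun N hN => ?_
  exact ⟨hN.1, p ⟨N, hN⟩, mem_range_self _, (hp ⟨N, hN⟩).2⟩

end LocallyFiniteFamily

end

theorem sigma_locally_finite_meets_countably_cellular_countably
    {X : Type*} [TopologicalSpace X] [ParacompactSpace X] [T2Space X]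
    (𝒩 : ℕ → Set (Set X))
    -- each family `𝒩 i` is locally finite:
    (hlf : ∀ i : ℕ, ∀ x : X, ∃ U ∈ nhds x,
      {N ∈ 𝒩 i | (N ∩ U).Nonempty}.Finite)
    (C : Set X)
    -- `C` (with the subspace topology) is countably cellular:
    (hcc : ∀ 𝒪 : Set (Set C), (∀ O ∈ 𝒪, IsOpen O ∧ O.Nonempty) →
      𝒪.Pairwise Disjoint → 𝒪.Countable) :
    {N : Set X | N ∈ ⋃ i, 𝒩 i ∧ (C ∩ N).Nonempty}.Countable := by
  refine (countable_iUnion fun i =>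
    countable_setOf_inter_nonempty_of_countablyCellular (hlf i) (C := C) hcc).mono ?_
  rintro N ⟨hN, hCN⟩
  obtain ⟨i, hi⟩ := mem_iUnion.1 hN
  exact mem_iUnion.2 ⟨i, hi, hCN⟩
end

section
/- Let A be a family of meager subsets of a separable metrizable space X. If the cardinality of A is strictly less than add(M), the additivity of the meager ideal on the real line, then the union ⋃A is meager in X. -/
/-!
Isolated points are harmless: they form an open set whose frontier is nowhere dense and which
meets no meagre set. On the rest, an open set `U` of a separable metric space without isolated
points, and likewise on `ℝ`, build a Lusin scheme: open cells indexed by finite sequences, with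
pairwise disjoint children whose union is dense in the parent and diameters tending to zero.
Each scheme turns a closed nowhere dense set into a nowhere dense set of branches in the Baire
space, and a nowhere dense set of branches back into a closed nowhere dense set. As `ℝ` is
complete, every branch has a limit point there, so fewer than `add(𝓜)` meagre subsets of `U`
are carried to as many meagre subsets of `ℝ`; their meagre union is carried back to a meagre set
covering the original union up to the nowhere dense gaps of the scheme.
-/

universe u v w

open Set Metric Filter TopologicalSpace

/-- Lists grow at the head: `initSeg b n = [b (n - 1), …, b 1, b 0]`. -/
def initSeg (b : ℕ → ℕ) : ℕ → List ℕ
  | 0 => []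
  | n + 1 => b n :: initSeg b n

@[simp]
lemma length_initSeg (b : ℕ → ℕ) (n : ℕ) : (initSeg b n).length = n := by
  induction n with
  | zero => rfl
  | succ n ih => simp [initSeg, ih]

lemma initSeg_suffix_initSeg (b : ℕ → ℕ) {n m : ℕ} (h : n ≤ m) :
    initSeg b n <:+ initSeg b m := by
  induction m, h using Nat.le_induction with
  | base => exact List.suffix_rfl
  | succ m _ ih => exact ih.trans (List.suffix_cons _ _)

lemma exists_forall_initSeg {P : List ℕ → Prop} (hnil : P [])
    (hcons : ∀ s, P s → ∃ n, P (n :: s)) :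
    ∃ b : ℕ → ℕ, ∀ n, P (initSeg b n) := by
  have step : ∀ s, ∃ n, P s → P (n :: s) := fun s => by
    by_cases hs : P s
    · exact (hcons s hs).imp fun _ h _ => h
    · exact ⟨0, fun h => absurd h hs⟩
  choose next hnext using step
  let path : ℕ → List ℕ := fun k => Nat.rec [] (fun _ s => next s :: s) k
  have hpath : ∀ k, initSeg (fun k => next (path k)) k = path k := by
    intro k
    induction k with
    | zero => rfl
    | succ k ih => simp only [initSeg, ih]; rfl
  refine ⟨fun k => next (path k), fun k => ?_⟩
  rw [hpath]
  induction k with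
  | zero => exact hnil
  | succ k ih => exact hnext _ ih

def cyl (s : List ℕ) : Set (ℕ → ℕ) := {b | initSeg b s.length = s}

/-- Nowhere density in the Baire space `ℕ → ℕ`, phrased through its basic cylinders. -/
def CylNowhereDense (C : Set (ℕ → ℕ)) : Prop :=
  ∀ s, ∃ t, s <:+ t ∧ Disjoint (cyl t) C

structure LusinScheme (M : Type*) [MetricSpace M] where
  cell : List ℕ → Set M
  isOpen_cell : ∀ s, IsOpen (cell s)
  nonempty_cell : ∀ s, (cell s).Nonempty
  closure_cell_cons_subset : ∀ n s, closure (cell (n :: s)) ⊆ cell s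
  disjoint_cell_cons : ∀ s, Pairwise fun n m => Disjoint (cell (n :: s)) (cell (m :: s))
  cell_subset_closure_iUnion : ∀ s, cell s ⊆ closure (⋃ n, cell (n :: s))
  dist_le_of_mem_cell_cons :
    ∀ n s, ∀ x ∈ cell (n :: s), ∀ y ∈ cell (n :: s), dist x y ≤ (1 / 2 : ℝ) ^ s.length

lemma IsOpen.isNowhereDense_frontier {X : Type*} [TopologicalSpace X] {U : Set X} (hU : IsOpen U) :
    IsNowhereDense (frontier U) := by
  rw [isClosed_frontier.isNowhereDense_iff, ← frontier_compl]
  exact interior_frontier hU.isClosed_compl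

namespace LusinScheme

variable {M : Type*} [MetricSpace M] (σ : LusinScheme M)

lemma cell_cons_subset (n : ℕ) (s : List ℕ) : σ.cell (n :: s) ⊆ σ.cell s :=
  subset_closure.trans (σ.closure_cell_cons_subset n s)

lemma cell_anti {s t : List ℕ} (h : s <:+ t) : σ.cell t ⊆ σ.cell s := by
  obtain ⟨w, rfl⟩ := h
  induction w with
  | nil => exact subset_rfl
  | cons n w ih => exact (σ.cell_cons_subset n (w ++ s)).trans ih

lemma disjoint_cell_of_length_eq :
    ∀ {s t : List ℕ}, s.length = t.length → s ≠ t → Disjoint (σ.cell s) (σ.cell t)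
  | [], [], _, hne => (hne rfl).elim
  | [], _ :: _, hl, _ | _ :: _, [], hl, _ => by simp at hl
  | n :: s, m :: t, hl, hne => by
    by_cases hst : s = t
    · subst hst
      exact σ.disjoint_cell_cons s fun h => hne (h ▸ rfl)
    · exact (disjoint_cell_of_length_eq (by simpa using hl) hst).mono
        (σ.cell_cons_subset n s) (σ.cell_cons_subset m t)

lemma exists_inter_cell_cons_nonempty {O : Set M} (hO : IsOpen O) {s : List ℕ}
    (h : (O ∩ σ.cell s).Nonempty) : ∃ n, (O ∩ σ.cell (n :: s)).Nonempty := by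
  obtain ⟨x, hxO, hx⟩ := h
  obtain ⟨y, hyO, hy⟩ := _root_.mem_closure_iff.mp (σ.cell_subset_closure_iUnion s hx) O hO hxO
  obtain ⟨n, hyn⟩ := mem_iUnion.mp hy
  exact ⟨n, y, hyO, hyn⟩

lemma exists_cell_subset {O : Set M} (hO : IsOpen O) {s : List ℕ}
    (h : (O ∩ σ.cell s).Nonempty) :
    ∃ t, s <:+ t ∧ σ.cell t ⊆ O := by
  obtain ⟨x, hxO, hxs⟩ := h
  obtain ⟨r, hr, hball⟩ := Metric.isOpen_iff.mp hO x hxO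
  have deep : ∀ j, ∃ n t, s <:+ t ∧ j ≤ t.length ∧
      (ball x (r / 2) ∩ σ.cell (n :: t)).Nonempty := by
    intro j
    induction j with
    | zero =>
      obtain ⟨n, hn⟩ := σ.exists_inter_cell_cons_nonempty isOpen_ball
        ⟨x, mem_ball_self (half_pos hr), hxs⟩
      exact ⟨n, s, List.suffix_rfl, Nat.zero_le _, hn⟩
    | succ j ih =>
      obtain ⟨n, t, hst, hj, hne⟩ := ih
      obtain ⟨m, hm⟩ := σ.exists_inter_cell_cons_nonempty isOpen_ball hne
      exact ⟨m, n :: t, hst.trans (List.suffix_cons _ _), by simpa using hj, hm⟩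
  obtain ⟨j, hj⟩ := exists_pow_lt_of_lt_one (half_pos hr) (by norm_num : (1 / 2 : ℝ) < 1)
  obtain ⟨n, t, hst, hjt, y, hyx, hyt⟩ := deep j
  refine ⟨n :: t, hst.trans (List.suffix_cons _ _), fun w hw => hball ?_⟩
  have hwy : dist w y ≤ (1 / 2 : ℝ) ^ j :=
    (σ.dist_le_of_mem_cell_cons n t w hw y hyt).trans (pow_le_pow_of_le_one (by norm_num)
      (by norm_num) hjt)
  calc dist w x ≤ dist w y + dist y x := dist_triangle w y x
    _ < r := by linarith [mem_ball.mp hyx]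

def branchesMeeting (N : Set M) : Set (ℕ → ℕ) :=
  {b | ∀ n, (closure (σ.cell (initSeg b n)) ∩ N).Nonempty}

/-- The closed subset of `M` coded by a set `C` of branches. -/
def realize (C : Set (ℕ → ℕ)) : Set M :=
  closure (σ.cell []) \ ⋃ (s : List ℕ) (_ : Disjoint (cyl s) C), σ.cell s

def gap (s : List ℕ) : Set M :=
  σ.cell s \ ⋃ n, σ.cell (n :: s)

lemma cylNowhereDense_branchesMeeting {N : Set M} (hNc : IsClosed N) (hN : IsNowhereDense N) :
    CylNowhereDense (σ.branchesMeeting N) := by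
  intro s
  have hsN : ¬σ.cell s ⊆ N := fun h => (σ.nonempty_cell s).ne_empty <| subset_empty_iff.mp <|
    (interior_maximal h (σ.isOpen_cell s)).trans_eq (hNc.isNowhereDense_iff.mp hN)
  obtain ⟨t, hst, htN⟩ := σ.exists_cell_subset hNc.isOpen_compl
    (by rw [inter_comm]; exact inter_compl_nonempty_iff.mpr hsN)
  refine ⟨0 :: t, hst.trans (List.suffix_cons _ _), disjoint_left.mpr fun b hb hbN => ?_⟩
  obtain ⟨y, hyt, hyN⟩ := hbN (0 :: t).length
  rw [hb] at hyt
  exact htN (σ.closure_cell_cons_subset 0 t hyt) hyN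

lemma isNowhereDense_realize {C : Set (ℕ → ℕ)} (hC : CylNowhereDense C) :
    IsNowhereDense (σ.realize C) := by
  have hclosed : IsClosed (σ.realize C) :=
    isClosed_closure.sdiff (isOpen_biUnion fun s _ => σ.isOpen_cell s)
  rw [hclosed.isNowhereDense_iff, ← not_nonempty_iff_eq_empty]
  rintro ⟨x, hx⟩
  obtain ⟨t, -, ht⟩ := σ.exists_cell_subset isOpen_interior
    (_root_.mem_closure_iff.mp (interior_subset hx).1 _ isOpen_interior hx)
  obtain ⟨t', htt', hdisj⟩ := hC t
  obtain ⟨y, hy⟩ := σ.nonempty_cell t'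
  exact (interior_subset (ht (σ.cell_anti htt' hy))).2 (mem_biUnion hdisj hy)

lemma isNowhereDense_gap (s : List ℕ) : IsNowhereDense (σ.gap s) := by
  have hopen : IsOpen (⋃ n, σ.cell (n :: s)) := isOpen_iUnion fun n => σ.isOpen_cell (n :: s)
  refine hopen.isNowhereDense_frontier.mono fun x hx => ?_
  rw [hopen.frontier_eq]
  exact ⟨σ.cell_subset_closure_iUnion s hx.1, hx.2⟩

lemma exists_branch_or_mem_gap {x : M} (hx : x ∈ σ.cell []) :
    (∃ b : ℕ → ℕ, ∀ n, x ∈ σ.cell (initSeg b n)) ∨ ∃ s, x ∈ σ.gap s := by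
  by_contra! h
  obtain ⟨b, hb⟩ := exists_forall_initSeg (P := fun s => x ∈ σ.cell s) hx fun s hs => by
    by_contra! hno
    exact h.2 s ⟨hs, by simpa using hno⟩
  obtain ⟨n, hn⟩ := h.1 b
  exact hn (hb n)

lemma exists_forall_mem_closure_cell [CompleteSpace M] (b : ℕ → ℕ) :
    ∃ x, ∀ n, x ∈ closure (σ.cell (initSeg b n)) := by
  -- Only the cells below the root have bounded diameter, hence the shift by one.
  choose p hp using fun n => σ.nonempty_cell (initSeg b (n + 1))
  have hmem : ∀ {n m}, n ≤ m + 1 → p m ∈ σ.cell (initSeg b n) :=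
    fun h => σ.cell_anti (initSeg_suffix_initSeg b h) (hp _)
  have hcauchy : CauchySeq p := cauchySeq_of_le_geometric_two (C := 2) fun n => by
    simpa [one_div, inv_pow, div_eq_mul_inv] using σ.dist_le_of_mem_cell_cons (b n) (initSeg b n)
      _ (hp n) _ (hmem (n := n + 1) (m := n + 1) (by omega))
  obtain ⟨x, hx⟩ := cauchySeq_tendsto_of_complete hcauchy
  refine ⟨x, fun n => mem_closure_of_tendsto hx ?_⟩
  filter_upwards [eventually_ge_atTop n] with m hm
  exact hmem (by omega)

lemma mem_realize {C : Set (ℕ → ℕ)} {b : ℕ → ℕ} (hb : b ∈ C) {x : M}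
    (hx : ∀ n, x ∈ closure (σ.cell (initSeg b n))) : x ∈ σ.realize C := by
  refine ⟨hx 0, fun hmem => ?_⟩
  obtain ⟨s, hdisj, hxs⟩ := mem_iUnion₂.mp hmem
  have hs : s = initSeg b s.length := by
    by_contra hne
    obtain ⟨y, hys, hyb⟩ := _root_.mem_closure_iff.mp (hx s.length) _ (σ.isOpen_cell s) hxs
    exact (σ.disjoint_cell_of_length_eq (by simp) hne).ne_of_mem hys hyb rfl
  exact disjoint_left.mp hdisj (show b ∈ cyl s from hs.symm) hb

end LusinScheme

section Existence

variable {M : Type*} [MetricSpace M]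

lemma exists_rat_closedBall_subset {D : Set M} (hD : Dense D) {W : Set M} (hW : IsOpen W)
    {x p : M} (hxW : x ∈ W) (hxp : x ≠ p) {ε : ℝ} (hε : 0 < ε) :
    ∃ d ∈ D, ∃ q : ℚ, 0 < (q : ℝ) ∧ (q : ℝ) ≤ ε / 2 ∧ closedBall d q ⊆ W ∧
      3 * (q : ℝ) < dist d p := by
  obtain ⟨r₀, hr₀, hball⟩ := Metric.isOpen_iff.mp hW x hxW
  set r := min (min r₀ ε) (dist x p)
  have hr : 0 < r := lt_min (lt_min hr₀ hε) (dist_pos.mpr hxp)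
  have hrr₀ : r ≤ r₀ := (min_le_left _ _).trans (min_le_left _ _)
  have hrε : r ≤ ε := (min_le_left _ _).trans (min_le_right _ _)
  have hrp : r ≤ dist x p := min_le_right _ _
  obtain ⟨d, hdD, hdx⟩ :=
    hD.exists_mem_open isOpen_ball (nonempty_ball.mpr (by positivity : 0 < r / 8))
  obtain ⟨q, hq₁, hq₂⟩ := exists_rat_btwn (by linarith : r / 8 < r / 4)
  have hdx : dist d x < r / 8 := mem_ball.mp hdx
  refine ⟨d, hdD, q, by linarith, by linarith, fun z hz => hball ?_, ?_⟩
  · have := dist_triangle z d x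
    rw [mem_ball]
    linarith [mem_closedBall.mp hz]
  · linarith [dist_triangle x d p, dist_comm x d]

lemma exists_pairwiseDisjoint_balls [SeparableSpace M] {U : Set M}
    (hU : IsOpen U) (hperf : ∀ x ∈ U, ¬IsOpen ({x} : Set M)) (p : M) {ε : ℝ}
    (hε : 0 < ε) :
    ∃ F : Set (M × ℚ), F.Countable ∧ F.PairwiseDisjoint (fun c => ball c.1 c.2) ∧
      (∀ c ∈ F, 0 < (c.2 : ℝ) ∧ (c.2 : ℝ) ≤ ε / 2 ∧ closedBall c.1 c.2 ⊆ U ∧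
        3 * (c.2 : ℝ) < dist c.1 p) ∧
      U ⊆ closure (⋃ c ∈ F, ball c.1 c.2) := by
  obtain ⟨D, hDc, hD⟩ := exists_countable_dense M
  set cand : Set (M × ℚ) := {c | c.1 ∈ D ∧ 0 < (c.2 : ℝ) ∧ (c.2 : ℝ) ≤ ε / 2 ∧
    closedBall c.1 c.2 ⊆ U ∧ 3 * (c.2 : ℝ) < dist c.1 p}
  obtain ⟨F, hFcand, hFdisj, hFmeet⟩ := Vitali.exists_disjoint_subfamily_covering_enlargement
    (fun c : M × ℚ => ball c.1 c.2) cand (fun c => c.2) 2 one_lt_two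
    (fun c hc => hc.2.1.le) (ε / 2) (fun c hc => hc.2.2.1) (fun c hc => nonempty_ball.mpr hc.2.1)
  have hFc : F.Countable :=
    (hDc.prod (countable_univ (α := ℚ))).mono fun c hc =>
      mem_prod.mpr ⟨(hFcand hc).1, mem_univ c.2⟩
  refine ⟨F, hFc, hFdisj,
    fun c hc => (hFcand hc).2, fun x hx => _root_.mem_closure_iff.mpr fun O hO hxO => ?_⟩
  obtain ⟨x', hx'W, hx'p⟩ : ∃ x' ∈ O ∩ U, x' ≠ p := by
    by_contra! h
    have hOU : O ∩ U = {p} :=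
      (show (O ∩ U).Nonempty from ⟨x, hxO, hx⟩).subset_singleton_iff.mp h
    exact hperf p (hOU.symm.subset rfl).2 (hOU ▸ hO.inter hU)
  obtain ⟨d, hdD, q, hq, hqε, hqW, hqp⟩ :=
    exists_rat_closedBall_subset hD (hO.inter hU) hx'W hx'p hε
  obtain ⟨c, hcF, ⟨y, hyq, hyc⟩, -⟩ :=
    hFmeet (d, q) ⟨hdD, hq, hqε, hqW.trans inter_subset_right, hqp⟩
  exact ⟨y, (hqW (ball_subset_closedBall hyq)).1, mem_biUnion hcF hyc⟩

lemma exists_dense_disjoint_children [SeparableSpace M] {U : Set M}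
    (hU : IsOpen U) (hne : U.Nonempty) (hperf : ∀ x ∈ U, ¬IsOpen ({x} : Set M)) {ε : ℝ}
    (hε : 0 < ε) :
    ∃ V : ℕ → Set M, (∀ n, IsOpen (V n)) ∧ (∀ n, (V n).Nonempty) ∧
      (∀ n, closure (V n) ⊆ U) ∧ Pairwise (fun n m => Disjoint (V n) (V m)) ∧
      U ⊆ closure (⋃ n, V n) ∧ ∀ n, ∀ x ∈ V n, ∀ y ∈ V n, dist x y ≤ ε := by
  obtain ⟨p, hp⟩ := hne
  obtain ⟨F, hFc, hFdisj, hF, hdense⟩ := exists_pairwiseDisjoint_balls hU hperf p hε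
  -- `p` lies in no closed ball of the family, so finitely many of them cannot have `U` in the
  -- closure of their union.
  have hFinf : F.Infinite := fun hfin => by
    rw [hfin.closure_biUnion] at hdense
    obtain ⟨c, hcF, hpc⟩ := mem_iUnion₂.mp (hdense hp)
    have := mem_closedBall'.mp (closure_ball_subset_closedBall hpc)
    linarith [(hF c hcF).1, (hF c hcF).2.2.2]
  obtain ⟨_⟩ := Set.countable_infinite_iff_nonempty_denumerable.mp ⟨hFc, hFinf⟩
  let e : ℕ ≃ F := (Denumerable.eqv F).symm
  refine ⟨fun n => ball (e n).1.1 (e n).1.2, fun n => isOpen_ball,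
    fun n => nonempty_ball.mpr (hF _ (e n).2).1,
    fun n => closure_ball_subset_closedBall.trans (hF _ (e n).2).2.2.1,
    fun n m hnm => hFdisj (e n).2 (e m).2 (Subtype.val_injective.ne (e.injective.ne hnm)),
    hdense.trans (closure_mono fun y hy => ?_),
    fun n x hx y hy => ?_⟩
  · obtain ⟨c, hcF, hyc⟩ := mem_iUnion₂.mp hy
    exact mem_iUnion.mpr ⟨e.symm ⟨c, hcF⟩, by simpa using hyc⟩
  · linarith [dist_triangle_right x y (e n).1.1, mem_ball.mp hx, mem_ball.mp hy,
      (hF _ (e n).2).2.1]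

lemma LusinScheme.exists_cell_nil_eq [SeparableSpace M] {U : Set M}
    (hU : IsOpen U) (hne : U.Nonempty) (hperf : ∀ x ∈ U, ¬IsOpen ({x} : Set M)) :
    ∃ σ : LusinScheme M, σ.cell [] = U := by
  have children : ∀ (W : Set M) (k : ℕ), ∃ V : ℕ → Set M,
      IsOpen W ∧ W.Nonempty ∧ W ⊆ U →
      (∀ n, IsOpen (V n)) ∧ (∀ n, (V n).Nonempty) ∧ (∀ n, closure (V n) ⊆ W) ∧
      Pairwise (fun n m => Disjoint (V n) (V m)) ∧ W ⊆ closure (⋃ n, V n) ∧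
      ∀ n, ∀ x ∈ V n, ∀ y ∈ V n, dist x y ≤ (1 / 2 : ℝ) ^ k := by
    intro W k
    by_cases hW : IsOpen W ∧ W.Nonempty ∧ W ⊆ U
    · obtain ⟨V, hV⟩ := exists_dense_disjoint_children hW.1 hW.2.1
        (fun x hx => hperf x (hW.2.2 hx)) (by positivity : (0 : ℝ) < (1 / 2) ^ k)
      exact ⟨V, fun _ => hV⟩
    · exact ⟨fun _ => ∅, fun h => absurd h hW⟩
  choose child hchild using children
  let cell : List ℕ → Set M := fun s => List.rec U (fun n s W => child W s.length n) s
  have hcell : ∀ s, IsOpen (cell s) ∧ (cell s).Nonempty ∧ cell s ⊆ U := by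
    intro s
    induction s with
    | nil => exact ⟨hU, hne, subset_rfl⟩
    | cons n s ih =>
      obtain ⟨hop, hne, hcl, -⟩ := hchild (cell s) s.length ih
      exact ⟨hop n, hne n, subset_closure.trans ((hcl n).trans ih.2.2)⟩
  exact ⟨⟨cell, fun s => (hcell s).1, fun s => (hcell s).2.1,
    fun n s => (hchild _ _ (hcell s)).2.2.1 n, fun s => (hchild _ _ (hcell s)).2.2.2.1,
    fun s => (hchild _ _ (hcell s)).2.2.2.2.1, fun n s => (hchild _ _ (hcell s)).2.2.2.2.2 n⟩,
    rfl⟩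

end Existence

namespace LusinScheme

variable {M Y : Type*} [MetricSpace M] [MetricSpace Y] (σ : LusinScheme M)

lemma isNowhereDense_realize_branchesMeeting (ρ : LusinScheme Y) {N : Set Y}
    (hN : IsNowhereDense N) : IsNowhereDense (σ.realize (ρ.branchesMeeting (closure N))) :=
  σ.isNowhereDense_realize (ρ.cylNowhereDense_branchesMeeting isClosed_closure hN.closure)

/-- Transfer through the Baire space: a point `x` of `⋃ A` not in a gap follows a branch `b`,
whose limit point `z` in `Y` lies in a meagre set `B i` built from a cover of `A i`; a cover of
`⋃ B` then puts `x` back into a nowhere dense set of `M`. -/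
theorem isMeagre_cell_nil_inter_iUnion [CompleteSpace Y] (ρ : LusinScheme Y) {ι : Type*}
    (A : ι → Set M) (hA : ∀ i, IsMeagre (A i))
    (hY : ∀ B : ι → Set Y, (∀ i, IsMeagre (B i)) → IsMeagre (⋃ i, B i)) :
    IsMeagre (σ.cell [] ∩ ⋃ i, A i) := by
  choose S hSnd hSc hAS using fun i => isMeagre_iff_countable_union_isNowhereDense.mp (hA i)
  set B : ι → Set Y := fun i => ⋃ t ∈ S i, ρ.realize (σ.branchesMeeting (closure t))
  obtain ⟨T, hTnd, hTc, hBT⟩ := isMeagre_iff_countable_union_isNowhereDense.mp <|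
    hY B fun i => isMeagre_biUnion (hSc i) fun t ht =>
      (ρ.isNowhereDense_realize_branchesMeeting σ (hSnd i t ht)).isMeagre
  have hcover : σ.cell [] ∩ ⋃ i, A i ⊆
      (⋃ t ∈ T, σ.realize (ρ.branchesMeeting (closure t))) ∪ ⋃ s, σ.gap s := by
    rintro x ⟨hx, hxA⟩
    obtain ⟨i, hxi⟩ := mem_iUnion.mp hxA
    rcases σ.exists_branch_or_mem_gap hx with ⟨b, hb⟩ | ⟨s, hs⟩
    · obtain ⟨t, ht, hxt⟩ := hAS i hxi
      obtain ⟨z, hz⟩ := ρ.exists_forall_mem_closure_cell b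
      have hzB : z ∈ B i := mem_biUnion ht <|
        ρ.mem_realize (fun n => ⟨x, subset_closure (hb n), subset_closure hxt⟩) hz
      obtain ⟨t', ht', hzt'⟩ := hBT (mem_iUnion_of_mem i hzB)
      exact Or.inl <| mem_biUnion ht' <|
        σ.mem_realize (fun n => ⟨z, hz n, subset_closure hzt'⟩) fun n => subset_closure (hb n)
    · exact Or.inr (mem_iUnion_of_mem s hs)
  refine (IsMeagre.union ?_ ?_).mono hcover
  · exact isMeagre_biUnion hTc fun t ht =>
      (σ.isNowhereDense_realize_branchesMeeting ρ (hTnd t ht)).isMeagre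
  · exact isMeagre_iUnion fun s => (σ.isNowhereDense_gap s).isMeagre

end LusinScheme

theorem IsOpen.isMeagre_inter_iUnion {M Y : Type*} [MetricSpace M] [SeparableSpace M]
    [MetricSpace Y] [CompleteSpace Y] [SeparableSpace Y] [PerfectSpace Y] [Nonempty Y]
    {U : Set M} (hU : IsOpen U)
    (hperf : ∀ x ∈ U, ¬IsOpen ({x} : Set M)) {ι : Type*} (A : ι → Set M)
    (hA : ∀ i, IsMeagre (A i))
    (hY : ∀ B : ι → Set Y, (∀ i, IsMeagre (B i)) → IsMeagre (⋃ i, B i)) :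
    IsMeagre (U ∩ ⋃ i, A i) := by
  rcases U.eq_empty_or_nonempty with rfl | hne
  · simpa using IsMeagre.empty
  obtain ⟨σ, rfl⟩ := LusinScheme.exists_cell_nil_eq hU hne hperf
  obtain ⟨ρ, -⟩ := LusinScheme.exists_cell_nil_eq isOpen_univ univ_nonempty
    fun y _ => not_isOpen_singleton (X := Y) y
  exact σ.isMeagre_cell_nil_inter_iUnion ρ A hA hY

section Perfect

variable {X : Type*} [TopologicalSpace X]

lemma IsMeagre.not_isOpen_singleton {s : Set X} (hs : IsMeagre s) {x : X} (hx : x ∈ s) :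
    ¬IsOpen ({x} : Set X) := fun hxo => by
  obtain ⟨S, hS, -, hsS⟩ := isMeagre_iff_countable_union_isNowhereDense.mp hs
  obtain ⟨t, ht, hxt⟩ := hsS hx
  have hsub : {x} ⊆ interior (closure t) :=
    interior_maximal (singleton_subset_iff.mpr (subset_closure hxt)) hxo
  rw [hS t ht] at hsub
  exact hsub rfl

lemma isMeagre_of_isMeagre_inter_compl_closure_isolated {s : Set X}
    (hs : ∀ x ∈ s, ¬IsOpen ({x} : Set X))
    (h : IsMeagre ((closure {x : X | IsOpen ({x} : Set X)})ᶜ ∩ s)) : IsMeagre s := by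
  have hI : IsOpen {x : X | IsOpen ({x} : Set X)} :=
    isOpen_iff_forall_mem_open.mpr fun x hx => ⟨{x}, singleton_subset_iff.mpr hx, hx, rfl⟩
  refine (hI.isNowhereDense_frontier.isMeagre.union h).mono fun x hx => ?_
  by_cases hxI : x ∈ closure {x : X | IsOpen ({x} : Set X)}
  · exact Or.inl (hI.frontier_eq ▸ ⟨hxI, hs x hx⟩)
  · exact Or.inr ⟨hxI, hx⟩

end Perfect

open Cardinal

/-- The additivity `add(𝓜)` of the meagre ideal of `Y`. -/
noncomputable def addMeagre (Y : Type*) [TopologicalSpace Y] : Cardinal :=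
  sInf {c | ∃ ℬ : Set (Set Y), #ℬ = c ∧ (∀ B ∈ ℬ, IsMeagre B) ∧
    ¬IsMeagre (⋃₀ ℬ)}

lemma isMeagre_iUnion_of_lift_mk_lt_addMeagre {Y : Type v} [TopologicalSpace Y] {ι : Type w}
    (hι : lift.{v} #ι < lift.{w} (addMeagre Y)) (B : ι → Set Y) (hB : ∀ i, IsMeagre (B i)) :
    IsMeagre (⋃ i, B i) := by
  by_contra hB'
  have hmin : addMeagre Y ≤ #(range B) :=
    csInf_le' ⟨range B, rfl, forall_mem_range.mpr hB, by rwa [sUnion_range]⟩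
  exact hι.not_ge ((lift_le.mpr hmin).trans mk_range_le_lift)

theorem union_meagre_of_card_lt_add_meagre
    {X : Type u} [TopologicalSpace X] [TopologicalSpace.MetrizableSpace X]
    [TopologicalSpace.SeparableSpace X]
    (𝒜 : Set (Set X)) (h𝒜 : ∀ A ∈ 𝒜, IsMeagre A)
    (hcard : Cardinal.lift.{0} (#𝒜) <
      Cardinal.lift.{u} (sInf {c : Cardinal.{0} | ∃ ℬ : Set (Set ℝ),
        #ℬ = c ∧ (∀ B ∈ ℬ, IsMeagre B) ∧ ¬ IsMeagre (⋃₀ ℬ)})) :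
    IsMeagre (⋃₀ 𝒜) := by
  let _ : MetricSpace X := metrizableSpaceMetric X
  rw [sUnion_eq_iUnion]
  refine isMeagre_of_isMeagre_inter_compl_closure_isolated (fun x hx => ?_) ?_
  · obtain ⟨A, hxA⟩ := mem_iUnion.mp hx
    exact (h𝒜 A A.2).not_isOpen_singleton hxA
  · exact isClosed_closure.isOpen_compl.isMeagre_inter_iUnion
      (fun x hx hxo => hx (subset_closure hxo)) _ (fun A => h𝒜 A A.2)
      (isMeagre_iUnion_of_lift_mk_lt_addMeagre hcard)
end

section
/- Let D be an uncountable discrete space, αD = D ∪ {∞} its one-point compactification, and αℕ = ℕ ∪ {∞} the one-point compactification of ℕ. Let X ⊆ D^ℕ be the set of injective functions ℕ → D (with the product topology, where D^ℕ is metrizable by a complete metric). Each x ∈ X extends uniquely to a continuous map x̄ : αℕ → αD, and the function f : X × αℕ → αD, f(x,n) = x̄(n), is separately continuous but discontinuous at every point of X × {∞}. -/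
open OnePoint Filter Topology

lemma map_inj_continuous {D : Type*} [TopologicalSpace D] [DiscreteTopology D]
    {x : ℕ → D} (hx : Function.Injective x) : Continuous (OnePoint.map x) := by
  apply OnePoint.continuous_map continuous_of_discreteTopology
  rw [Filter.coclosedCompact_eq_cocompact, Filter.coclosedCompact_eq_cocompact,
    Filter.cocompact_eq_cofinite, Filter.cocompact_eq_cofinite]
  exact hx.tendsto_cofinite

theorem injective_sequences_evaluation_separately_continuous_not_continuous
    {D : Type*} [TopologicalSpace D] [DiscreteTopology D] [Uncountable D] :
    -- each injective `x : ℕ → D` extends uniquely to a continuous map `αℕ → αD`: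
    (∀ x : {x : ℕ → D // Function.Injective x},
      Continuous (OnePoint.map x.1) ∧
      ∀ g : OnePoint ℕ → OnePoint D, Continuous g →
        (∀ n : ℕ, g n = (x.1 n : OnePoint D)) → g = OnePoint.map x.1) ∧
    -- `f (x, n) = x̄ n` is separately continuous:
    (∀ x : {x : ℕ → D // Function.Injective x},
      Continuous (fun n : OnePoint ℕ =>
        (fun p : {x : ℕ → D // Function.Injective x} × OnePoint ℕ =>
          OnePoint.map p.1.1 p.2) (x, n))) ∧
    (∀ n : OnePoint ℕ,
      Continuous (fun x : {x : ℕ → D // Function.Injective x} =>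
        (fun p : {x : ℕ → D // Function.Injective x} × OnePoint ℕ =>
          OnePoint.map p.1.1 p.2) (x, n))) ∧
    -- but `f` is discontinuous at every point of `X × {∞}`:
    (∀ x : {x : ℕ → D // Function.Injective x},
      ¬ ContinuousAt (fun p : {x : ℕ → D // Function.Injective x} × OnePoint ℕ =>
          OnePoint.map p.1.1 p.2) (x, ∞)) := by
  refine ⟨fun x => ⟨map_inj_continuous x.2, fun g hg hgn => ?_⟩,
    fun x => map_inj_continuous x.2, fun n => ?_, fun x => ?_⟩
  · refine Continuous.ext_on OnePoint.denseRange_coe hg (map_inj_continuous x.2) ?_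
    rintro _ ⟨n, rfl⟩
    simp [hgn n]
  · -- continuity in x for fixed n
    cases n with
    | infty => simpa using continuous_const (y := (∞ : OnePoint D))
    | coe m =>
      simp only [OnePoint.map, Option.map_some]
      exact OnePoint.continuous_coe.comp ((continuous_apply m).comp continuous_subtype_val)
  · -- discontinuity at (x, ∞)
    intro hcont
    -- pick an injection `e : ℕ → D` whose range is disjoint from `range x`
    obtain ⟨e, he_inj, he⟩ : ∃ e : ℕ → D, Function.Injective e ∧ ∀ i j, e i ≠ x.1 j := by
      have hcc : (Set.range x.1)ᶜ.Infinite := by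
        by_contra h
        rw [Set.not_infinite] at h
        have : (Set.univ : Set D).Countable := by
          have := (Set.countable_range x.1).union h.countable
          simpa [Set.union_compl_self] using this
        exact (not_countable_iff.mpr inferInstance) (Set.countable_univ_iff.mp this)
      let E := hcc.natEmbedding
      refine ⟨fun n => (E n : D), fun a b h => E.injective (Subtype.ext h), fun i j hij => ?_⟩
      exact (E i).2 ⟨j, hij.symm⟩
    have yinj : ∀ k : ℕ, Function.Injective
        (fun i => if i ≤ k then x.1 i else e (i - (k + 1))) := by
      intro k a b h
      simp only at h
      by_cases ha : a ≤ k <;> by_cases hb : b ≤ k <;> simp only [ha, hb, if_true, if_false,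
        if_pos, if_neg, reduceIte] at h
      · exact x.2 h
      · exact absurd h.symm (he _ _)
      · exact absurd h (he _ _)
      · have := he_inj h; omega
    set y : ℕ → {x : ℕ → D // Function.Injective x} :=
      fun k => ⟨fun i => if i ≤ k then x.1 i else e (i - (k + 1)), yinj k⟩ with hy
    have hy1 : Tendsto y atTop (𝓝 x) := by
      rw [tendsto_subtype_rng]
      rw [tendsto_pi_nhds]
      intro i
      have hev : (fun _ : ℕ => x.1 i) =ᶠ[atTop] fun k => (y k : ℕ → D) i := by
        filter_upwards [eventually_ge_atTop i] with k hk
        simp [hy, hk]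
      exact Tendsto.congr' hev tendsto_const_nhds
    have hy2 : Tendsto (fun k : ℕ => ((k + 1 : ℕ) : OnePoint ℕ)) atTop (𝓝 ∞) := by
      refine OnePoint.tendsto_coe_infty.comp ?_
      rw [Filter.coclosedCompact_eq_cocompact, Filter.cocompact_eq_cofinite,
        Nat.cofinite_eq_atTop]
      exact tendsto_add_atTop_nat 1
    have h0 := hcont.tendsto.comp (hy1.prodMk_nhds hy2)
    have hconst : Tendsto (fun _ : ℕ => ((e 0 : D) : OnePoint D)) atTop
        (𝓝 (OnePoint.map x.1 ∞)) := by
      refine h0.congr fun k => ?_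
      show OnePoint.map (y k).1 ((k + 1 : ℕ) : OnePoint ℕ) = _
      simp only [hy, OnePoint.map_some]
      rw [if_neg (Nat.not_succ_le_self k), Nat.sub_self]
    rw [OnePoint.map_infty] at hconst
    have : ((e 0 : D) : OnePoint D) = ∞ := tendsto_const_nhds_iff.mp hconst
    exact OnePoint.coe_ne_infty _ this
end

section
/- Define sp : ℝ × ℝ → ℝ by sp(x,y) = 2xy/(x²+y²) for (x,y) ≠ (0,0) and sp(0,0) = 0. For a,b ∈ [0,1] define sp_{a,b} ∈ C[0,1] by sp_{a,b}(t) = sp(a−t, b) + sp(a, b−t). Then the map sp_** : [0,1] × [0,1] → C_p[0,1], (a,b) ↦ sp_{a,b}, is separately continuous, where C_p[0,1] is the space of continuous real functions on [0,1] with the topology of pointwise convergence. -/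
open unitInterval

noncomputable def sp (x y : ℝ) : ℝ :=
  if (x, y) = ((0 : ℝ), (0 : ℝ)) then 0 else 2 * x * y / (x ^ 2 + y ^ 2)

noncomputable def spab (a b t : ℝ) : ℝ := sp (a - t) b + sp a (b - t)

lemma sp_comm (x y : ℝ) : sp x y = sp y x := by
  unfold sp
  by_cases h : x = 0 ∧ y = 0
  · simp [h.1, h.2]
  · have h1 : (x, y) ≠ ((0:ℝ), (0:ℝ)) := by
      rw [Ne, Prod.mk.injEq]; exact h
    have h2 : (y, x) ≠ ((0:ℝ), (0:ℝ)) := by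
      rw [Ne, Prod.mk.injEq]; tauto
    rw [if_neg h1, if_neg h2]
    ring_nf

lemma sp_zero_left (y : ℝ) : sp 0 y = 0 := by
  unfold sp
  split <;> simp

lemma continuous_sp_right (x : ℝ) : Continuous (sp x) := by
  by_cases hx : x = 0
  · subst hx
    simpa [funext sp_zero_left] using continuous_const
  · have key : ∀ y, sp x y = 2 * x * y / (x ^ 2 + y ^ 2) := by
      intro y
      unfold sp
      rw [if_neg]
      rw [Prod.mk.injEq]
      tauto
    simp only [funext key]
    apply Continuous.div
    · fun_prop
    · fun_prop
    · intro y
      positivity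

lemma continuous_sp_left (y : ℝ) : Continuous (fun x => sp x y) := by
  simpa [funext fun x => sp_comm x y] using continuous_sp_right y

/-- The map `sp_** : [0,1] × [0,1] → C_p[0,1]` is well-defined (each `sp_{a,b}` is
continuous) and separately continuous into the topology of pointwise convergence
(the subspace topology induced from the product topology on `[0,1] → ℝ`). -/
theorem spStarStar_separately_continuous :
    (∀ a b : I, Continuous (fun t : I => spab a b t)) ∧
    (∀ a : I, Continuous (fun b : I => (fun t : I => spab a b t : I → ℝ))) ∧
    (∀ b : I, Continuous (fun a : I => (fun t : I => spab a b t : I → ℝ))) := by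
  refine ⟨?_, ?_, ?_⟩
  · intro a b
    unfold spab
    apply Continuous.add
    · exact (continuous_sp_left b).comp (by fun_prop)
    · exact (continuous_sp_right a).comp (by fun_prop)
  · intro a
    apply continuous_pi
    intro t
    unfold spab
    apply Continuous.add
    · exact (continuous_sp_right ((a:ℝ) - t)).comp (by fun_prop)
    · exact (continuous_sp_right a).comp (by fun_prop)
  · intro b
    apply continuous_pi
    intro t
    unfold spab
    apply Continuous.add
    · exact (continuous_sp_left b).comp (by fun_prop)
    · exact (continuous_sp_left ((b:ℝ) - t)).comp (by fun_prop)
end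

section
/- The function sp_** : [0,1] × [0,1] → C_p[0,1] defined via sp_{a,b}(t) = sp(a−t,b) + sp(a,b−t), with sp(x,y) = 2xy/(x²+y²) for (x,y) ≠ (0,0) and sp(0,0)=0, is discontinuous at every point of ([0,1] × {0}) ∪ ({0} × [0,1]). -/
open unitInterval

lemma sp_zero_zero : sp 0 0 = 0 := by simp [sp]

lemma sp_diag {x : ℝ} (hx : x ≠ 0) : sp x x = 1 := by
  rw [sp, if_neg (by simp [hx])]
  field_simp
  ring

lemma sp_antidiag {x : ℝ} (hx : x ≠ 0) : sp x (-x) = -1 := by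
  rw [sp, if_neg (by simp [hx])]
  field_simp
  ring

lemma sp_antidiag' {x : ℝ} (hx : x ≠ 0) : sp (-x) x = -1 := by
  have := sp_antidiag (neg_ne_zero.mpr hx)
  simpa using this

lemma key (p : I × I) (t : I) (u : ℕ → I × I)
    (hu : Filter.Tendsto u Filter.atTop (nhds p))
    (c : ℝ) (hne : c ≠ spab p.1 p.2 t)
    (hc : ∀ᶠ n in Filter.atTop, spab ((u n).1 : ℝ) ((u n).2 : ℝ) t = c) :
    ¬ ContinuousAt (fun q : I × I => (fun t : I => spab q.1 q.2 t : I → ℝ)) p := by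
  intro h
  have h2 : ContinuousAt (fun q : I × I => spab q.1 q.2 (t : ℝ)) p :=
    (continuous_apply t).continuousAt.comp h
  have h3 : Filter.Tendsto (fun n => spab ((u n).1 : ℝ) ((u n).2 : ℝ) t)
      Filter.atTop (nhds (spab p.1 p.2 t)) := h2.tendsto.comp hu
  have h4 : Filter.Tendsto (fun _ : ℕ => c) Filter.atTop (nhds (spab p.1 p.2 t)) :=
    h3.congr' hc
  exact hne (tendsto_nhds_unique tendsto_const_nhds h4)

lemma eps_mem {b : ℝ} (hb : b ∈ Set.Icc (0:ℝ) 1) (n : ℕ) :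
    b / (n + 1) ∈ Set.Icc (0:ℝ) 1 := by
  constructor
  · exact div_nonneg hb.1 (by positivity)
  · rw [div_le_one (by positivity)]
    have : (0:ℝ) ≤ n := Nat.cast_nonneg n
    linarith [hb.2]

lemma sub_eps_mem {b : ℝ} (hb : b ∈ Set.Icc (0:ℝ) 1) (n : ℕ) :
    b - b / (n + 1) ∈ Set.Icc (0:ℝ) 1 := by
  have h1 : b / (n + 1) ≤ b := by
    apply div_le_self hb.1
    have : (0:ℝ) ≤ n := Nat.cast_nonneg n
    linarith
  have h0 : 0 ≤ b / (n + 1) := div_nonneg hb.1 (by positivity)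
  constructor <;> [linarith; linarith [hb.2]]

lemma eps_tendsto (b : ℝ) :
    Filter.Tendsto (fun n : ℕ => b / ((n : ℝ) + 1)) Filter.atTop (nhds 0) := by
  have := (tendsto_const_div_atTop_nhds_zero_nat b).comp (Filter.tendsto_add_atTop_nat 1)
  simpa [Function.comp_def] using this

lemma eps_lt {b : ℝ} (hb : 0 < b) {n : ℕ} (hn : 1 ≤ n) : b / (n + 1) < b := by
  rw [div_lt_iff₀ (by positivity)]
  have : (1:ℝ) ≤ n := by exact_mod_cast hn
  nlinarith

/-- The map `sp_** : [0,1] × [0,1] → C_p[0,1]` (viewed in the topology of pointwise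
convergence, i.e. induced from the product topology on `[0,1] → ℝ`) is discontinuous
at every point of `([0,1] × {0}) ∪ ({0} × [0,1])`. -/
theorem spStarStar_discontinuous_on_axes :
    ∀ p : I × I, (p.1 = 0 ∨ p.2 = 0) →
      ¬ ContinuousAt (fun q : I × I => (fun t : I => spab q.1 q.2 t : I → ℝ)) p := by
  rintro ⟨a, b⟩ hab
  by_cases ha0 : a = 0
  · by_cases hb0 : b = 0
    · -- p = (0,0), t = 0, u n = (ε, ε), c = 2
      subst ha0 hb0
      refine key _ 0 (fun n => (⟨1/(n+1), eps_mem (by norm_num) n⟩,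
        ⟨1/(n+1), eps_mem (by norm_num) n⟩)) ?_ 2 ?_ ?_
      · rw [nhds_prod_eq]
        refine Filter.Tendsto.prodMk ?_ ?_ <;>
          exact tendsto_subtype_rng.mpr (by simpa using eps_tendsto 1)
      · simp [spab, sp_zero_zero]
      · filter_upwards with n
        have hε : (1:ℝ)/(n+1) ≠ 0 := by positivity
        simp only [spab]
        rw [show ((0:I):ℝ) = 0 by simp, sub_zero, sp_diag hε]
        norm_num
    · -- p = (0,b), b ≠ 0, t = b, u n = (ε, b-ε), c = -2
      subst ha0
      have hbpos : 0 < (b:ℝ) := lt_of_le_of_ne b.2.1 (fun h => hb0 (Subtype.ext h.symm))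
      refine key _ b (fun n => (⟨(b:ℝ)/(n+1), eps_mem b.2 n⟩,
        ⟨(b:ℝ) - (b:ℝ)/(n+1), sub_eps_mem b.2 n⟩)) ?_ (-2) ?_ ?_
      · rw [nhds_prod_eq]
        refine Filter.Tendsto.prodMk ?_ ?_
        · exact tendsto_subtype_rng.mpr (by simpa using eps_tendsto b)
        · exact tendsto_subtype_rng.mpr (by simpa using tendsto_const_nhds.sub (eps_tendsto (b:ℝ)))
      · simp only [spab]
        rw [show ((0:I):ℝ) = 0 by simp, zero_sub, sub_self, sp_zero_zero,
          sp_antidiag' hbpos.ne']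
        norm_num
      · filter_upwards [Filter.eventually_ge_atTop 1] with n hn
        have hε : (0:ℝ) < (b:ℝ)/(n+1) := by positivity
        have hlt : (b:ℝ)/(n+1) < b := eps_lt hbpos hn
        simp only [spab]
        rw [show (b:ℝ)/(n+1) - b = -(b - (b:ℝ)/(n+1)) by ring,
          sp_antidiag' (by linarith : (b:ℝ) - (b:ℝ)/(n+1) ≠ 0)]
        rw [show (b:ℝ) - (b:ℝ)/(n+1) - b = -((b:ℝ)/(n+1)) by ring,
          sp_antidiag hε.ne']
        norm_num
  · -- then p.2 = 0, a ≠ 0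
    have hb0 : b = 0 := hab.resolve_left ha0
    subst hb0
    have hapos : 0 < (a:ℝ) := lt_of_le_of_ne a.2.1 (fun h => ha0 (Subtype.ext h.symm))
    refine key _ a (fun n => (⟨(a:ℝ) - (a:ℝ)/(n+1), sub_eps_mem a.2 n⟩,
      ⟨(a:ℝ)/(n+1), eps_mem a.2 n⟩)) ?_ (-2) ?_ ?_
    · rw [nhds_prod_eq]
      refine Filter.Tendsto.prodMk ?_ ?_
      · exact tendsto_subtype_rng.mpr (by simpa using tendsto_const_nhds.sub (eps_tendsto (a:ℝ)))
      · exact tendsto_subtype_rng.mpr (by simpa using eps_tendsto (a:ℝ))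
    · simp only [spab]
      rw [show ((0:I):ℝ) = 0 by simp, sub_self, zero_sub, sp_zero_zero,
        sp_antidiag hapos.ne']
      norm_num
    · filter_upwards [Filter.eventually_ge_atTop 1] with n hn
      have hε : (0:ℝ) < (a:ℝ)/(n+1) := by positivity
      have hlt : (a:ℝ)/(n+1) < a := eps_lt hapos hn
      simp only [spab]
      rw [show (a:ℝ) - (a:ℝ)/(n+1) - a = -((a:ℝ)/(n+1)) by ring,
        sp_antidiag' hε.ne']
      rw [show (a:ℝ)/(n+1) - a = -((a:ℝ) - (a:ℝ)/(n+1)) by ring,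
        sp_antidiag (by linarith : (a:ℝ) - (a:ℝ)/(n+1) ≠ 0)]
      norm_num
end

section
/- Let f : X × Y → Z be separately continuous, where X, Y are topological spaces with countable dense subsets D_X ⊆ X, D_Y ⊆ Y, and Y is first countable and X is first countable. Then f(X × Y) is contained in cl₁(cl₁(f(D_X × D_Y))), the second sequential closure of the countable set f(D_X × D_Y) in Z. -/
theorem separately_continuous_range_subset_double_seqClosure
    {X Y Z : Type*} [TopologicalSpace X] [TopologicalSpace Y] [TopologicalSpace Z]
    [FirstCountableTopology X]
    [FirstCountableTopology Y]
    (DX : Set X) (hDXc : DX.Countable) (hDXd : Dense DX)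
    (DY : Set Y) (hDYc : DY.Countable) (hDYd : Dense DY)
    (f : X × Y → Z)
    (hfX : ∀ y : Y, Continuous (fun x : X => f (x, y)))
    (hfY : ∀ x : X, Continuous (fun y : Y => f (x, y))) :
    Set.range f ⊆ seqClosure (seqClosure (f '' (DX ×ˢ DY))) := by
  rintro _ ⟨⟨x, y⟩, rfl⟩
  obtain ⟨u, hu, hux⟩ := mem_closure_iff_seq_limit.mp (hDXd x)
  refine ⟨fun n => f (u n, y), fun n => ?_, ((hfX y).continuousAt).tendsto.comp hux⟩
  obtain ⟨v, hv, hvy⟩ := mem_closure_iff_seq_limit.mp (hDYd y)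
  exact ⟨fun m => f (u n, v m), fun m => ⟨(u n, v m), ⟨hu n, hv m⟩, rfl⟩,
    ((hfY (u n)).continuousAt).tendsto.comp hvy⟩
end

section
/- Every separable subspace S of the Σ^{<κ}-product Σ^{<κ}_{α∈A}(X_α, *_α), where κ is a regular uncountable cardinal, is contained (up to homeomorphism via the coordinate restriction) in a subproduct ∏_{α∈B} X_α for some subset B ⊆ A of cardinality |B| < κ. -/
open Cardinal

theorem separable_subspace_of_sigma_product_in_small_subproduct
    {ι : Type u} {X : ι → Type v} [∀ α, TopologicalSpace (X α)]
    (p : ∀ α, X α) (hp : ∀ α, IsClosed ({p α} : Set (X α)))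
    (κ : Cardinal.{u}) (hreg : κ.IsRegular) (hunc : ℵ₀ < κ)
    (S : Set (∀ α, X α))
    -- `S` lies in the `Σ^{<κ}`-product:
    (hS : ∀ x ∈ S, #{α : ι | x α ≠ p α} < κ)
    -- `S` is separable: it has a countable dense (in `S`) subset:
    (D : Set (∀ α, X α)) (hD : D ⊆ S) (hDc : D.Countable) (hDd : S ⊆ closure D) :
    ∃ B : Set ι, #B < κ ∧ ∀ x ∈ S, ∀ α ∉ B, x α = p α := by
  rcases D.eq_empty_or_nonempty with hDe | hDne
  · refine ⟨∅, ?_, ?_⟩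
    · simpa using hreg.pos
    · intro x hx α _
      have := hDd hx
      rw [hDe, closure_empty] at this
      exact absurd this (Set.notMem_empty x)
  · obtain ⟨f, hf⟩ := hDc.exists_eq_range hDne
    set t : ULift.{u} ℕ → Set ι := fun n => {α | f n.down α ≠ p α} with ht
    refine ⟨⋃ n, t n, ?_, ?_⟩
    · rw [card_iUnion_lt_iff_forall_of_isRegular hreg (by simpa using hunc)]
      intro n
      exact hS _ (hD (hf ▸ Set.mem_range_self n.down))
    · intro x hx α hα
      have hclosed : IsClosed {y : ∀ β, X β | y α = p α} :=
        (hp α).preimage (continuous_apply α)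
      have hDsub : D ⊆ {y : ∀ β, X β | y α = p α} := by
        intro d hd
        rw [hf] at hd
        obtain ⟨n, rfl⟩ := hd
        by_contra h
        exact hα (Set.mem_iUnion.mpr ⟨⟨n⟩, h⟩)
      exact (hclosed.closure_subset_iff.mpr hDsub) (hDd hx)
end
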